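/- arXiv:1805.08254 — 4 statements merged into one kernel-verified Lean document; each statement's English description precedes it below -/
import Mathlib

section
/- Let F = BV(v) be the class of functions f : [0,1] → ℝ with total variation at most v, and let t < v. Then the t-fat-shattering dimension of the dual class F* satisfies d*_F(t) ≤ 2·log₂(v/t). -/
/-!
The $2^n$ points $x_b$ witnessing the shattering are distinct. List them in increasing order:
consecutive points carry different sign patterns $b$, so some $f_i$ changes by at least $2t$
between them. Summing over the $2^n - 1$ gaps and comparing with the total variation $v$ of each
of the $n$ functions gives $2t(2^n - 1) \le n v$, and $n \cdot 2^{n/2} \le 2(2^n - 1)$ turns this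
into $2^{n/2} \le v / t$.
-/

/-- `f` has total variation at most `v` on `[0,1]`: over every finite monotone
sequence of points of `[0,1]`, the sum of absolute increments is at most `v`. -/
def VarLe (f : ℝ → ℝ) (v : ℝ) : Prop :=
  ∀ (k : ℕ) (x : Fin (k + 1) → ℝ), Monotone x → (∀ j, x j ∈ Set.Icc (0 : ℝ) 1) →
    ∑ j : Fin k, |f (x j.succ) - f (x j.castSucc)| ≤ v

/-- The class BV(v) of functions `[0,1] → ℝ` of total variation at most `v`. -/
def BV (v : ℝ) : Set (ℝ → ℝ) := {f | VarLe f v}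

/-- A set of `n` (distinct) functions of `F` is `t`-shattered by the dual class
`F*` (whose elements are evaluation points in `[0,1]`). -/
def DualShattered (F : Set (ℝ → ℝ)) (t : ℝ) (n : ℕ) : Prop :=
  ∃ f : Fin n → ℝ → ℝ, (∀ i, f i ∈ F) ∧ Function.Injective f ∧
    ∃ r : Fin n → ℝ, ∀ b : Fin n → Bool, ∃ x ∈ Set.Icc (0 : ℝ) 1,
      ∀ i, (b i = true → r i + t ≤ f i x) ∧ (b i = false → f i x ≤ r i - t)

open Finset

lemma two_mul_le_abs_sub_of_ne {t r a c : ℝ} {β γ : Bool}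
    (ha : (β = true → r + t ≤ a) ∧ (β = false → a ≤ r - t))
    (hc : (γ = true → r + t ≤ c) ∧ (γ = false → c ≤ r - t)) (hne : β ≠ γ) :
    2 * t ≤ |a - c| := by
  cases β <;> cases γ
  all_goals first
    | exact absurd rfl hne
    | rw [abs_sub_comm]; linarith [le_abs_self (c - a), ha.2 rfl, hc.1 rfl]
    | linarith [le_abs_self (a - c), ha.1 rfl, hc.2 rfl]

lemma card_mul_le_card_mul_of_forall_exists_le {ι κ : Type*} [Fintype ι] [Fintype κ]
    {g : ι → κ → ℝ} {c v : ℝ} (hg : ∀ i j, 0 ≤ g i j) (hrow : ∀ i, ∑ j, g i j ≤ v)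
    (hcol : ∀ j, ∃ i, c ≤ g i j) :
    Fintype.card κ * c ≤ Fintype.card ι * v := by
  calc Fintype.card κ * c = ∑ _j : κ, c := by simp
    _ ≤ ∑ j, ∑ i, g i j := sum_le_sum fun j _ => by
        obtain ⟨i, hi⟩ := hcol j
        exact hi.trans (single_le_sum (fun i _ => hg i j) (mem_univ i))
    _ = ∑ i, ∑ j, g i j := sum_comm
    _ ≤ ∑ _i : ι, v := sum_le_sum fun i _ => hrow i
    _ = Fintype.card ι * v := by simp

lemma exists_strictMono_comp_of_injective {α : Type*} [Fintype α] {x : α → ℝ}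
    (hx : Function.Injective x) {k : ℕ} (hk : Fintype.card α = k + 1) :
    ∃ p : Fin (k + 1) → α, StrictMono (x ∘ p) := by
  classical
  have hcard : (univ.image x).card = k + 1 := by
    rw [card_image_of_injective _ hx, card_univ, hk]
  have hmem (j : Fin (k + 1)) : ∃ a, x a = (univ.image x).orderEmbOfFin hcard j := by
    simpa only [mem_image, mem_univ, true_and] using (univ.image x).orderEmbOfFin_mem hcard j
  choose p hp using hmem
  refine ⟨p, fun j j' hjj' => ?_⟩
  simpa only [Function.comp_apply, hp] using ((univ.image x).orderEmbOfFin hcard).strictMono hjj'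

lemma DualShattered.two_pow_sub_one_mul_le {v t : ℝ} (ht : 0 < t) {n : ℕ}
    (h : DualShattered (BV v) t n) : ((2 : ℝ) ^ n - 1) * (2 * t) ≤ n * v := by
  obtain ⟨f, hfBV, -, r, hshat⟩ := h
  choose x hxIcc hx using hshat
  have hsep {b b' : Fin n → Bool} {i : Fin n} (hi : b i ≠ b' i) :
      2 * t ≤ |f i (x b) - f i (x b')| :=
    two_mul_le_abs_sub_of_ne (hx b i) (hx b' i) hi
  have hxinj : Function.Injective x := fun b b' hbb' => by
    by_contra hne
    obtain ⟨i, hi⟩ := Function.ne_iff.mp hne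
    have := hsep hi
    rw [hbb', sub_self, abs_zero] at this
    linarith
  obtain ⟨k, hk⟩ : ∃ k, 2 ^ n = k + 1 := Nat.exists_eq_add_one.mpr (by positivity)
  obtain ⟨p, hp⟩ := exists_strictMono_comp_of_injective hxinj
    (by rw [Fintype.card_fun, Fintype.card_bool, Fintype.card_fin, hk])
  have hgap (j : Fin k) : ∃ i, 2 * t ≤ |f i (x (p j.succ)) - f i (x (p j.castSucc))| := by
    have hne : p j.succ ≠ p j.castSucc := fun he =>
      (hp (Fin.castSucc_lt_succ (i := j))).ne (by simp only [Function.comp_apply, he])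
    obtain ⟨i, hi⟩ := Function.ne_iff.mp hne
    exact ⟨i, hsep hi⟩
  have hkR : (k : ℝ) = 2 ^ n - 1 := by
    rw [eq_sub_iff_add_eq]; exact_mod_cast hk.symm
  have := card_mul_le_card_mul_of_forall_exists_le (fun _ _ => abs_nonneg _)
    (fun i => hfBV i k (x ∘ p) hp.monotone fun j => hxIcc (p j)) hgap
  simpa [hkR] using this

lemma natCast_sq_mul_two_pow_le {n : ℕ} (hn : 1 ≤ n) :
    (n : ℝ) ^ 2 * 2 ^ n ≤ (2 * ((2 : ℝ) ^ n - 1)) ^ 2 := by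
  induction n, hn using Nat.le_induction with
  | base => norm_num
  | succ m _ ih =>
    rcases Nat.lt_or_ge m 3 with hm3 | hm3
    · interval_cases m <;> norm_num
    have hm3R : (3 : ℝ) ≤ m := by exact_mod_cast hm3
    have ha : (1 : ℝ) ≤ 2 ^ m := one_le_pow₀ one_le_two
    push_cast
    calc ((m : ℝ) + 1) ^ 2 * 2 ^ (m + 1) = (((m : ℝ) + 1) ^ 2 * 2) * 2 ^ m := by ring
      _ ≤ (4 * (m : ℝ) ^ 2) * 2 ^ m :=
        mul_le_mul_of_nonneg_right (by nlinarith) (by positivity)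
      _ = 4 * ((m : ℝ) ^ 2 * 2 ^ m) := by ring
      _ ≤ 4 * (2 * ((2 : ℝ) ^ m - 1)) ^ 2 := by gcongr
      _ ≤ (2 * ((2 : ℝ) ^ (m + 1) - 1)) ^ 2 := by
        rw [pow_succ (2 : ℝ) m]; nlinarith

lemma two_pow_le_sq_of_two_mul_le {n : ℕ} {u : ℝ} (hu : 1 ≤ u)
    (h : 2 * ((2 : ℝ) ^ n - 1) ≤ n * u) : (2 : ℝ) ^ n ≤ u ^ 2 := by
  rcases Nat.eq_zero_or_pos n with rfl | hn
  · simpa using one_le_pow₀ (n := 2) hu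
  have hnpos : (0 : ℝ) < (n : ℝ) ^ 2 := by positivity
  refine le_of_mul_le_mul_left ?_ hnpos
  calc (n : ℝ) ^ 2 * 2 ^ n ≤ (2 * ((2 : ℝ) ^ n - 1)) ^ 2 := natCast_sq_mul_two_pow_le hn
    _ ≤ (n * u) ^ 2 :=
        pow_le_pow_left₀ (by linarith [one_le_pow₀ (M₀ := ℝ) (n := n) one_le_two]) h 2
    _ = (n : ℝ) ^ 2 * u ^ 2 := by ring

/-- for F = BV(v) and t < v, the dual t-fat-shattering dimension is
at most 2·log₂(v/t). -/
theorem stmt3 (v t : ℝ) (ht : 0 < t) (htv : t < v) (n : ℕ)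
    (h : DualShattered (BV v) t n) : (n : ℝ) ≤ 2 * Real.logb 2 (v / t) := by
  have hu : 1 ≤ v / t := (one_le_div ht).mpr htv.le
  have hgaps : 2 * ((2 : ℝ) ^ n - 1) ≤ n * (v / t) := by
    rw [← mul_div_assoc, le_div_iff₀ ht]
    linarith [h.two_pow_sub_one_mul_le ht]
  have hpow := two_pow_le_sq_of_two_mul_le hu hgaps
  rw [← Real.logb_rpow_eq_mul_logb_of_pos (by positivity),
    Real.le_logb_iff_rpow_le one_lt_two (by positivity)]
  exact_mod_cast hpow
end

section
/- Let F = BV(v) be the class of functions f : [0,1] → ℝ with total variation at most v, and suppose 4t < v. Then the dual t-fat-shattering dimension satisfies d*_F(t) ≥ ⌊log₂(v/t)⌋. -/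
/-!
Cut `[0,1]` into `2 ^ n` cells and let the `i`-th function take the value `±t` according to
bit `i` of the reflected Gray code of the cell index. Every sign pattern is the Gray code of
some cell, so the `n` functions are `t`-shattered (with thresholds `0`) by the cell points.
Along `[0,1]` bit `i` of the code changes only `2 ^ (n - 1 - i) ≤ 2 ^ (n - 1)` times, each time
by `2t`, so each function has variation at most `t * 2 ^ n ≤ v` once `n = ⌊log₂ (v / t)⌋`.
-/

open Set

theorem Fin.sum_succ_sub_castSucc {M : Type*} [AddCommGroup M] :
    ∀ {k : ℕ} (g : Fin (k + 1) → M),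
      ∑ j : Fin k, (g j.succ - g j.castSucc) = g (Fin.last k) - g 0
  | 0, g => by simp
  | k + 1, g => by
    rw [Fin.sum_univ_castSucc]
    simp only [Fin.succ_castSucc]
    rw [Fin.sum_succ_sub_castSucc (fun j => g j.castSucc)]
    simp

theorem VarLe.mono {f : ℝ → ℝ} {v w : ℝ} (hf : VarLe f v) (hvw : v ≤ w) : VarLe f w :=
  fun k x hx hI => (hf k x hx hI).trans hvw

theorem varLe_of_abs_sub_le_sub {f h : ℝ → ℝ}
    (hfh : ∀ x ∈ Icc (0 : ℝ) 1, ∀ y ∈ Icc (0 : ℝ) 1, x ≤ y → |f y - f x| ≤ h y - h x) :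
    VarLe f (h 1 - h 0) := by
  intro k x hx hI
  have h0 : (0 : ℝ) ∈ Icc (0 : ℝ) 1 := ⟨le_rfl, zero_le_one⟩
  have h1 : (1 : ℝ) ∈ Icc (0 : ℝ) 1 := ⟨zero_le_one, le_rfl⟩
  calc ∑ j : Fin k, |f (x j.succ) - f (x j.castSucc)|
      ≤ ∑ j : Fin k, (h (x j.succ) - h (x j.castSucc)) :=
        Finset.sum_le_sum fun j _ => hfh _ (hI _) _ (hI _) (hx (Fin.castSucc_le_succ j))
    _ = h (x (Fin.last k)) - h (x 0) := Fin.sum_succ_sub_castSucc (h ∘ x)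
    _ ≤ h 1 - h 0 := by
      have hle1 := (abs_nonneg _).trans (hfh _ (hI (Fin.last k)) 1 h1 (hI _).2)
      have hle0 := (abs_nonneg _).trans (hfh 0 h0 _ (hI 0) (hI 0).1)
      linarith

theorem abs_neg_one_pow_sub_neg_one_pow_le {a b : ℕ} (hba : b ≤ a) :
    |(-1 : ℝ) ^ a - (-1) ^ b| ≤ 2 * ((a : ℝ) - b) := by
  rcases hba.eq_or_lt with rfl | hlt
  · simp
  · have hab : (b : ℝ) + 1 ≤ a := by exact_mod_cast hlt
    calc |(-1 : ℝ) ^ a - (-1) ^ b| ≤ |(-1 : ℝ) ^ a| + |(-1) ^ b| := abs_sub _ _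
      _ = 2 := by norm_num [abs_pow]
      _ ≤ 2 * ((a : ℝ) - b) := by linarith

theorem varLe_mul_neg_one_pow {c : ℝ} (hc : 0 ≤ c) {q : ℝ → ℕ} (hq : Monotone q) :
    VarLe (fun x => c * (-1) ^ q x) (2 * c * ((q 1 : ℝ) - q 0)) := by
  have := varLe_of_abs_sub_le_sub (f := fun x => c * (-1) ^ q x) (h := fun x => 2 * c * q x)
    fun x _ y _ hxy => by
      rw [← mul_sub, abs_mul, abs_of_nonneg hc, ← mul_sub, mul_comm 2 c, mul_assoc]
      gcongr
      exact abs_neg_one_pow_sub_neg_one_pow_le (hq hxy)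
  simpa only [mul_sub] using this

/-- `grayIndex i K` is odd iff bits `i` and `i + 1` of `K` differ, i.e. iff bit `i` of the
Gray code `K ^^^ (K >>> 1)` is set: adding `2 ^ i` carries into bit `i + 1` exactly when bit `i`
of `K` is set. Unlike the bit itself, `grayIndex i` is monotone in `K`. -/
def grayIndex (i K : ℕ) : ℕ := (K + 2 ^ i) / 2 ^ (i + 1)

theorem grayIndex_mono (i : ℕ) : Monotone (grayIndex i) :=
  fun _ _ h => Nat.div_le_div_right (by omega)

theorem grayIndex_two_pow {i n : ℕ} (hi : i < n) : grayIndex i (2 ^ n) = 2 ^ (n - (i + 1)) := by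
  obtain ⟨m, rfl⟩ : ∃ m, n = i + 1 + m := ⟨n - (i + 1), by omega⟩
  rw [grayIndex, pow_add, Nat.mul_add_div (by positivity),
    Nat.div_eq_of_lt (pow_lt_pow_right₀ one_lt_two (Nat.lt_succ_self i))]
  simp

theorem grayIndex_zero_two_mul_add {K c : ℕ} (hc : c ≤ 1) :
    grayIndex 0 (2 * K + c) = K + c := by
  simp only [grayIndex]
  omega

theorem grayIndex_succ_two_mul_add (i : ℕ) {K c : ℕ} (hc : c ≤ 1) :
    grayIndex (i + 1) (2 * K + c) = grayIndex i K := by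
  rw [grayIndex, grayIndex, pow_succ 2 (i + 1), mul_comm _ 2, ← Nat.div_div_eq_div_mul,
    pow_succ, mul_comm _ 2]
  congr 1
  omega

theorem exists_grayIndex_mod_two_eq : ∀ {n : ℕ} (b : Fin n → Bool),
    ∃ K < 2 ^ n, ∀ i : Fin n, grayIndex i K % 2 = (b i).toNat
  | 0, _ => ⟨0, by simp, fun i => i.elim0⟩
  | n + 1, b => by
    obtain ⟨K, hK, hKb⟩ := exists_grayIndex_mod_two_eq (Fin.tail b)
    have hc : (K + (b 0).toNat) % 2 ≤ 1 := by omega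
    refine ⟨2 * K + (K + (b 0).toNat) % 2, by rw [pow_succ]; omega, fun i => ?_⟩
    cases i using Fin.cases with
    | zero =>
      rw [Fin.val_zero, grayIndex_zero_two_mul_add hc]
      have := Bool.toNat_le (b 0)
      omega
    | succ i => rw [Fin.val_succ, grayIndex_succ_two_mul_add _ hc, hKb i, Fin.tail]

noncomputable def grayWave (n : ℕ) (t : ℝ) (i : ℕ) (x : ℝ) : ℝ :=
  t * (-1) ^ grayIndex i ⌊x * 2 ^ n⌋₊

theorem varLe_grayWave {n i : ℕ} {t : ℝ} (ht : 0 ≤ t) (hi : i < n) :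
    VarLe (grayWave n t i) (t * 2 ^ n) := by
  have hq : Monotone fun x : ℝ => grayIndex i ⌊x * 2 ^ n⌋₊ :=
    (grayIndex_mono i).comp fun _ _ h => Nat.floor_mono (by gcongr)
  refine (varLe_mul_neg_one_pow ht hq).mono ?_
  have hq1 : grayIndex i ⌊(1 : ℝ) * 2 ^ n⌋₊ ≤ 2 ^ (n - 1) := by
    rw [one_mul, ← Nat.cast_ofNat, ← Nat.cast_pow, Nat.floor_natCast, grayIndex_two_pow hi]
    exact Nat.pow_le_pow_right two_pos (by omega)
  have hn : (2 : ℝ) ^ n = 2 * 2 ^ (n - 1) := by rw [← pow_succ']; congr; omega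
  calc 2 * t * ((grayIndex i ⌊(1 : ℝ) * 2 ^ n⌋₊ : ℝ) - grayIndex i ⌊(0 : ℝ) * 2 ^ n⌋₊)
      ≤ 2 * t * (2 ^ (n - 1) : ℕ) := by
        gcongr
        exact (sub_le_self _ (Nat.cast_nonneg _)).trans (by exact_mod_cast hq1)
    _ = t * 2 ^ n := by rw [hn]; push_cast; ring

theorem grayWave_natCast_div_two_pow (n : ℕ) (t : ℝ) (i K : ℕ) :
    grayWave n t i (K / 2 ^ n) = t * (-1) ^ grayIndex i K := by
  rw [grayWave, div_mul_cancel₀ _ (by positivity), Nat.floor_natCast]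

theorem exists_grayWave_eq_ite {n : ℕ} (t : ℝ) (b : Fin n → Bool) :
    ∃ x ∈ Icc (0 : ℝ) 1, ∀ i : Fin n, grayWave n t i x = if b i then t else -t := by
  obtain ⟨K, hK, hKb⟩ := exists_grayIndex_mod_two_eq fun i => !b i
  refine ⟨K / 2 ^ n, ⟨by positivity, ?_⟩, fun i => ?_⟩
  · rw [div_le_one (by positivity)]
    exact_mod_cast hK.le
  · rw [grayWave_natCast_div_two_pow, neg_one_pow_eq_pow_mod_two, hKb i]
    cases b i <;> simp

theorem dualShattered_of_forall_exists {F : Set (ℝ → ℝ)} {t : ℝ} (ht : 0 < t) {n : ℕ}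
    (f : Fin n → ℝ → ℝ) (hF : ∀ i, f i ∈ F) (r : Fin n → ℝ)
    (hf : ∀ b : Fin n → Bool, ∃ x ∈ Icc (0 : ℝ) 1,
      ∀ i, (b i = true → r i + t ≤ f i x) ∧ (b i = false → f i x ≤ r i - t)) :
    DualShattered F t n := by
  refine ⟨f, hF, fun i j hij => ?_, r, hf⟩
  by_contra hne
  obtain ⟨x, -, hx⟩ := hf fun k => decide (k = i)
  obtain ⟨y, -, hy⟩ := hf fun k => decide (k = j)
  have h1 := (hx i).1 (by simp)
  have h2 := (hx j).2 (by simpa using Ne.symm hne)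
  have h3 := (hy j).1 (by simp)
  have h4 := (hy i).2 (by simpa using hne)
  rw [hij] at h1 h4
  linarith

theorem mul_two_pow_floor_logb_le {t v : ℝ} (ht : 0 < t) (htv : t ≤ v) :
    t * 2 ^ ⌊Real.logb 2 (v / t)⌋₊ ≤ v := by
  have h : (2 : ℝ) ^ (⌊Real.logb 2 (v / t)⌋₊ : ℝ) ≤ v / t := by
    rw [← Real.le_logb_iff_rpow_le one_lt_two (div_pos (ht.trans_le htv) ht)]
    exact Nat.floor_le (Real.logb_nonneg one_lt_two ((one_le_div ht).2 htv))
  rw [Real.rpow_natCast, le_div_iff₀ ht] at h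
  linarith

/-- for F = BV(v) and 4t < v, the dual t-fat-shattering dimension is
at least ⌊log₂(v/t)⌋. -/
theorem stmt4 (v t : ℝ) (ht : 0 < t) (htv : 4 * t < v) :
    DualShattered (BV v) t (Nat.floor (Real.logb 2 (v / t))) := by
  set n := Nat.floor (Real.logb 2 (v / t))
  have hv : t * 2 ^ n ≤ v := mul_two_pow_floor_logb_le ht (by linarith)
  refine dualShattered_of_forall_exists ht (fun i => grayWave n t i)
    (fun i => (varLe_grayWave ht.le i.isLt).mono hv) 0 fun b => ?_
  obtain ⟨x, hx, hb⟩ := exists_grayWave_eq_ite t b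
  refine ⟨x, hx, fun i => ⟨fun hi => ?_, fun hi => ?_⟩⟩ <;> simp [hb, hi]
end

section
/- Let Y be drawn from a categorical distribution over {1,…,T} with probabilities α'_1,…,α'_T, and let J_1,…,J_k be iid copies of Y. Fix a point x and a target value y, and suppose the probability mass of indices t with h_t(x) > Q⁺ is less than 1/2 − γ and likewise the mass of indices with h_t(x) < Q⁻ is less than 1/2 − γ, where |Q⁺ − y| ≤ η/2 and |Q⁻ − y| ≤ η/2. Then P(|Med(h_{J_1}(x),…,h_{J_k}(x)) − y| > η/2) ≤ 2·exp(−2kγ²). -/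
open MeasureTheory Finset
open scoped ENNReal

/-- The (unweighted) median: the smallest value `a j` such that strictly fewer
than half of the values exceed it. -/
noncomputable def Med (n : ℕ) (a : Fin n → ℝ) : ℝ :=
  sInf {z : ℝ | ∃ j : Fin n, a j = z ∧
    2 * ((Finset.univ : Finset (Fin n)).filter fun t => a j < a t).card < n}

lemma medSet_finite (n : ℕ) (a : Fin n → ℝ) :
    {z : ℝ | ∃ j : Fin n, a j = z ∧
      2 * ((Finset.univ : Finset (Fin n)).filter fun t => a j < a t).card < n}.Finite :=
  (Set.finite_range a).subset (fun _ ⟨j, hj, _⟩ => ⟨j, hj⟩)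

lemma medSet_nonempty (n : ℕ) (hn : 0 < n) (a : Fin n → ℝ) :
    {z : ℝ | ∃ j : Fin n, a j = z ∧
      2 * ((Finset.univ : Finset (Fin n)).filter fun t => a j < a t).card < n}.Nonempty := by
  have : Nonempty (Fin n) := ⟨⟨0, hn⟩⟩
  obtain ⟨j, -, hj⟩ := Finset.exists_max_image (univ : Finset (Fin n)) a univ_nonempty
  refine ⟨a j, j, rfl, ?_⟩
  have : (univ.filter fun t => a j < a t) = ∅ := by
    ext t; simp only [mem_filter, mem_univ, true_and, notMem_empty, iff_false, not_lt]
    exact hj t (mem_univ t)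
  rw [this]; simpa using hn

lemma Med_lt (n : ℕ) (hn : 0 < n) (a : Fin n → ℝ) (Qm : ℝ)
    (hlt : Med n a < Qm) :
    n ≤ 2 * ((univ : Finset (Fin n)).filter fun t => a t < Qm).card := by
  classical
  obtain ⟨j, hj, hcard⟩ := (medSet_nonempty n hn a).csInf_mem (medSet_finite n a)
  have hjlt : a j < Qm := by rw [Med] at hlt; rw [hj]; exact hlt
  have hsub : ((univ : Finset (Fin n)).filter fun t => ¬ a t < Qm) ⊆
      (univ.filter fun t => a j < a t) := by
    intro t ht
    simp only [mem_filter, mem_univ, true_and, not_lt] at ht ⊢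
    exact lt_of_lt_of_le hjlt ht
  have h1 := Finset.card_le_card hsub
  have h2 := Finset.card_filter_add_card_filter_not
    (s := (univ : Finset (Fin n))) (p := fun t => a t < Qm)
  simp only [Finset.card_univ, Fintype.card_fin] at h2
  omega

lemma Med_le (n : ℕ) (hn : 0 < n) (a : Fin n → ℝ) (Qp : ℝ)
    (hm : 2 * ((univ : Finset (Fin n)).filter fun t => Qp < a t).card < n) :
    Med n a ≤ Qp := by
  classical
  have hC : ((univ : Finset (Fin n)).filter fun t => a t ≤ Qp).Nonempty := by
    by_contra hC
    have : ((univ : Finset (Fin n)).filter fun t => Qp < a t) = univ := by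
      ext t; simp only [mem_filter, mem_univ, true_and, iff_true]
      by_contra ht
      exact hC ⟨t, by simp [not_lt.mp ht]⟩
    rw [this] at hm; simp at hm; omega
  obtain ⟨j, hjC, hj⟩ := Finset.exists_max_image _ a hC
  have hjQ : a j ≤ Qp := (mem_filter.mp hjC).2
  have hsub : ((univ : Finset (Fin n)).filter fun t => a j < a t) ⊆
      (univ.filter fun t => Qp < a t) := by
    intro t ht
    simp only [mem_filter, mem_univ, true_and] at ht ⊢
    by_contra hQt
    exact absurd (hj t (mem_filter.mpr ⟨mem_univ t, not_lt.mp hQt⟩)) (not_le.mpr ht)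
  have hcl := Finset.card_le_card hsub
  have hmem : a j ∈ {z : ℝ | ∃ j : Fin n, a j = z ∧
      2 * ((univ : Finset (Fin n)).filter fun t => a j < a t).card < n} :=
    ⟨j, rfl, by omega⟩
  exact le_trans (csInf_le ((medSet_finite n a).bddBelow) hmem) hjQ

lemma term_bound (pr qr : ℝ) (hpr : 0 ≤ pr) (hq : pr ≤ qr) (e d : ℕ) :
    pr ^ (e + d) * qr ^ e ≤ Real.sqrt (pr * qr) ^ (2 * e + d) := by
  have hqr : 0 ≤ qr := le_trans hpr hq
  have hsq : Real.sqrt (pr * qr) ^ 2 = pr * qr := Real.sq_sqrt (mul_nonneg hpr hqr)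
  have hple : pr ≤ Real.sqrt (pr * qr) := by
    calc pr = Real.sqrt (pr * pr) := (Real.sqrt_mul_self hpr).symm
    _ ≤ Real.sqrt (pr * qr) := Real.sqrt_le_sqrt (by nlinarith)
  calc pr ^ (e + d) * qr ^ e = (pr * qr) ^ e * pr ^ d := by ring
  _ ≤ (pr * qr) ^ e * Real.sqrt (pr * qr) ^ d := by
      exact mul_le_mul_of_nonneg_left (pow_le_pow_left₀ hpr hple d) (by positivity)
  _ = Real.sqrt (pr * qr) ^ (2 * e + d) := by
      rw [pow_add, pow_mul, hsq]

lemma base_bound (pr γ : ℝ) (hpr : 0 ≤ pr) (hγ : 0 < γ) (hplt : pr ≤ 1/2 - γ) :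
    2 * Real.sqrt (pr * (1 - pr)) ≤ Real.exp (-2 * γ ^ 2) := by
  have h1 : 0 ≤ pr * (1 - pr) := by nlinarith
  have h2 : (2 * Real.sqrt (pr * (1 - pr))) ^ 2 ≤ Real.exp (-2 * γ ^ 2) ^ 2 := by
    have hs : Real.sqrt (pr * (1 - pr)) ^ 2 = pr * (1 - pr) := Real.sq_sqrt h1
    have h3 : 4 * (pr * (1 - pr)) ≤ 1 - 4 * γ ^ 2 := by nlinarith
    have h4 : (1 : ℝ) - 4 * γ ^ 2 ≤ Real.exp (-(4 * γ ^ 2)) := by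
      have := Real.add_one_le_exp (-(4 * γ ^ 2)); linarith
    have h5 : Real.exp (-2 * γ ^ 2) ^ 2 = Real.exp (-(4 * γ ^ 2)) := by
      rw [← Real.exp_nat_mul]; ring_nf
    rw [h5, mul_pow, hs]; nlinarith
  exact (pow_le_pow_iff_left₀
    (mul_nonneg (by norm_num) (Real.sqrt_nonneg _)) (Real.exp_nonneg _) (two_ne_zero)).mp h2

lemma key {T k : ℕ} (hk : 0 < k) (α : Fin T → ℝ≥0∞) (hα : ∑ t, α t = 1)
    (B : Finset (Fin T)) {γ : ℝ} (hγ : 0 < γ) (hγ' : γ < 1/2)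
    (hp : ∑ t ∈ B, α t < ENNReal.ofReal (1/2 - γ)) :
    Measure.pi (fun _ : Fin k => (PMF.ofFintype α hα).toMeasure)
      {J : Fin k → Fin T | k ≤ 2 * (Finset.univ.filter fun j => J j ∈ B).card}
      ≤ ENNReal.ofReal (Real.exp (-2 * k * γ ^ 2)) := by
  classical
  set μ := Measure.pi (fun _ : Fin k => (PMF.ofFintype α hα).toMeasure) with hμ
  have hsing : ∀ J : Fin k → Fin T, μ {J} = ∏ j, α (J j) := by
    intro J
    rw [hμ, ← Set.univ_pi_singleton, Measure.pi_pi]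
    refine Finset.prod_congr rfl fun j _ => ?_
    rw [PMF.toMeasure_apply_singleton _ _ (measurableSet_singleton _), PMF.ofFintype_apply]
  set p : ℝ≥0∞ := ∑ t ∈ B, α t with hpdef
  set q : ℝ≥0∞ := ∑ t ∈ Bᶜ, α t with hqdef
  have hpq : p + q = 1 := by rw [hpdef, hqdef, Finset.sum_add_sum_compl, hα]
  have hp1 : p ≤ 1 := le_of_le_of_eq (le_add_right le_rfl) hpq
  have hq1 : q ≤ 1 := le_of_le_of_eq (le_add_left le_rfl) hpq
  have hpt : p ≠ ⊤ := ne_top_of_le_ne_top ENNReal.one_ne_top hp1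
  have hqt : q ≠ ⊤ := ne_top_of_le_ne_top ENNReal.one_ne_top hq1
  set pr : ℝ := p.toReal with hprdef
  have hpr0 : 0 ≤ pr := ENNReal.toReal_nonneg
  have hprlt : pr < 1/2 - γ := by
    have := (ENNReal.toReal_lt_toReal hpt ENNReal.ofReal_ne_top).mpr hp
    rwa [ENNReal.toReal_ofReal (by linarith)] at this
  have hqr : q.toReal = 1 - pr := by
    have h2 : p.toReal + q.toReal = 1 := by
      rw [← ENNReal.toReal_add hpt hqt, hpq, ENNReal.toReal_one]
    linarith
  have hprq : pr ≤ 1 - pr := by linarith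
  -- event as a finset
  set F : Finset (Fin k → Fin T) :=
    univ.filter (fun J => k ≤ 2 * (univ.filter fun j => J j ∈ B).card) with hF
  have hSF : {J : Fin k → Fin T | k ≤ 2 * (Finset.univ.filter fun j => J j ∈ B).card}
      = ⋃ J ∈ F, {J} := by
    ext J; simp [hF]
  have hμS : μ {J : Fin k → Fin T | k ≤ 2 * (Finset.univ.filter fun j => J j ∈ B).card}
      = ∑ J ∈ F, ∏ j, α (J j) := by
    rw [hSF, measure_biUnion_finset ?hd (fun b _ => measurableSet_singleton b)]
    · exact Finset.sum_congr rfl fun J _ => hsing J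
    · intro i _ j _ hij
      simp [Set.disjoint_singleton, hij]
  -- partition by the coordinate pattern
  set Sbig : Finset (Finset (Fin k)) := univ.filter (fun s => k ≤ 2 * s.card) with hSbig
  set tset : Finset (Fin k) → (Fin k → Finset (Fin T)) :=
    fun s j => if j ∈ s then B else Bᶜ with htset
  have hmem_pi : ∀ (s : Finset (Fin k)) (J : Fin k → Fin T),
      J ∈ Fintype.piFinset (tset s) ↔ (univ.filter fun j => J j ∈ B) = s := by
    intro s J
    rw [Fintype.mem_piFinset, Finset.ext_iff]
    apply forall_congr'
    intro j
    by_cases hjs : j ∈ s <;> simp [htset, hjs]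
  have hFsplit : F = Sbig.biUnion (fun s => Fintype.piFinset (tset s)) := by
    ext J
    rw [Finset.mem_biUnion, hF, mem_filter]
    constructor
    · rintro ⟨-, hJ⟩
      refine ⟨univ.filter fun j => J j ∈ B, ?_, (hmem_pi _ J).mpr rfl⟩
      rw [hSbig, mem_filter]; exact ⟨mem_univ _, hJ⟩
    · rintro ⟨s, hs, hJs⟩
      rw [hSbig, mem_filter] at hs
      exact ⟨mem_univ _, ((hmem_pi s J).mp hJs) ▸ hs.2⟩
  have hdisj : ∀ s ∈ Sbig, ∀ s' ∈ Sbig, s ≠ s' →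
      Disjoint (Fintype.piFinset (tset s)) (Fintype.piFinset (tset s')) := by
    intro s _ s' _ hss'
    rw [Finset.disjoint_left]
    intro J hJ hJ'
    exact hss' (((hmem_pi s J).mp hJ).symm.trans ((hmem_pi s' J).mp hJ'))
  have hfiber : ∀ s : Finset (Fin k),
      ∑ J ∈ Fintype.piFinset (tset s), ∏ j, α (J j) = p ^ s.card * q ^ (k - s.card) := by
    intro s
    rw [← Finset.prod_univ_sum]
    have : ∀ j : Fin k, ∑ u ∈ tset s j, α u = if j ∈ s then p else q := by
      intro j; by_cases hjs : j ∈ s <;> simp [htset, hjs, hpdef, hqdef]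
    rw [Finset.prod_congr rfl fun j _ => this j, Finset.prod_ite, Finset.prod_const,
      Finset.prod_const]
    congr 1
    · congr 1; simp
    · congr 1
      have hc : (univ.filter fun x => x ∉ s) = sᶜ := by ext j; simp
      rw [hc, Finset.card_compl, Fintype.card_fin]
  rw [hμS, hFsplit, Finset.sum_biUnion hdisj]
  have hterm : ∀ s ∈ Sbig, ∑ J ∈ Fintype.piFinset (tset s), ∏ j, α (J j)
      ≤ ENNReal.ofReal (Real.sqrt (pr * (1 - pr)) ^ k) := by
    intro s hs
    rw [hSbig, mem_filter] at hs
    rw [hfiber s]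
    have hmk : s.card ≤ k := by
      have := Finset.card_le_univ s
      simpa using this
    have hkm : k ≤ 2 * s.card := hs.2
    obtain ⟨e, d, hme, hkme, hk2⟩ :
        ∃ e d, s.card = e + d ∧ k - s.card = e ∧ k = 2 * e + d :=
      ⟨k - s.card, s.card - (k - s.card), by omega, rfl, by omega⟩
    have hqof : q = ENNReal.ofReal (1 - pr) := by
      rw [← hqr, ENNReal.ofReal_toReal hqt]
    have hpof : p = ENNReal.ofReal pr := by
      rw [hprdef, ENNReal.ofReal_toReal hpt]
    rw [hpof, hqof, ← ENNReal.ofReal_pow hpr0, ← ENNReal.ofReal_pow (by linarith),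
      ← ENNReal.ofReal_mul (by positivity)]
    apply ENNReal.ofReal_le_ofReal
    calc pr ^ s.card * (1 - pr) ^ (k - s.card)
        = pr ^ (e + d) * (1 - pr) ^ e := by
          rw [show k - s.card = e from hkme, show s.card = e + d from hme]
      _ ≤ Real.sqrt (pr * (1 - pr)) ^ (2 * e + d) := term_bound pr (1 - pr) hpr0 hprq e d
      _ = Real.sqrt (pr * (1 - pr)) ^ k := by rw [← hk2]
  calc ∑ s ∈ Sbig, ∑ J ∈ Fintype.piFinset (tset s), ∏ j, α (J j)
      ≤ Sbig.card • ENNReal.ofReal (Real.sqrt (pr * (1 - pr)) ^ k) :=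
        Finset.sum_le_card_nsmul _ _ _ hterm
    _ = (Sbig.card : ℝ≥0∞) * ENNReal.ofReal (Real.sqrt (pr * (1 - pr)) ^ k) := by
        rw [nsmul_eq_mul]
    _ ≤ ((2 : ℝ≥0∞) ^ k) * ENNReal.ofReal (Real.sqrt (pr * (1 - pr)) ^ k) := by
        gcongr
        have hcard : Sbig.card ≤ 2 ^ k := by
          calc Sbig.card ≤ Fintype.card (Finset (Fin k)) := Finset.card_le_univ Sbig
          _ = 2 ^ k := by rw [Fintype.card_finset, Fintype.card_fin]
        calc (Sbig.card : ℝ≥0∞) ≤ ((2 ^ k : ℕ) : ℝ≥0∞) := Nat.cast_le.mpr hcard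
        _ = (2 : ℝ≥0∞) ^ k := by push_cast; ring
    _ = ENNReal.ofReal ((2 * Real.sqrt (pr * (1 - pr))) ^ k) := by
        rw [mul_pow, ENNReal.ofReal_mul (by positivity),
          ENNReal.ofReal_pow (by norm_num : (0:ℝ) ≤ 2),
          ENNReal.ofReal_pow (Real.sqrt_nonneg _), ENNReal.ofReal_ofNat]
    _ ≤ ENNReal.ofReal (Real.exp (-2 * γ ^ 2) ^ k) := by
        apply ENNReal.ofReal_le_ofReal
        exact pow_le_pow_left₀ (by positivity)
          (base_bound pr γ hpr0 hγ (le_of_lt hprlt)) k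
    _ = ENNReal.ofReal (Real.exp (-2 * k * γ ^ 2)) := by
        rw [← Real.exp_nat_mul]
        congr 1
        ring


/-- if J_1,…,J_k are iid from the categorical distribution with
weights α', and the α'-mass of {t : h_t(x) > Q⁺} and of {t : h_t(x) < Q⁻} are
each less than 1/2 − γ, where |Q⁺ − y| ≤ η/2 and |Q⁻ − y| ≤ η/2, then
P(|Med(h_{J_1}(x),…,h_{J_k}(x)) − y| > η/2) ≤ 2·exp(−2kγ²). -/
theorem stmt9 {X : Type*} (T k : ℕ) (hT : 0 < T) (hk : 0 < k)
    (α : Fin T → ℝ≥0∞) (hα : ∑ t, α t = 1)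
    (h : Fin T → X → ℝ) (x : X) (y η γ Qp Qm : ℝ)
    (hγ : 0 < γ) (hγ' : γ < 1 / 2) (hη : 0 < η)
    (hQp : |Qp - y| ≤ η / 2) (hQm : |Qm - y| ≤ η / 2)
    (hmassP : (∑ t ∈ Finset.univ.filter fun t => Qp < h t x, α t)
      < ENNReal.ofReal (1 / 2 - γ))
    (hmassM : (∑ t ∈ Finset.univ.filter fun t => h t x < Qm, α t)
      < ENNReal.ofReal (1 / 2 - γ)) :
    Measure.pi (fun _ : Fin k => (PMF.ofFintype α hα).toMeasure)
        {J : Fin k → Fin T | η / 2 < |Med k (fun j => h (J j) x) - y|}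
      ≤ ENNReal.ofReal (2 * Real.exp (-2 * k * γ ^ 2)) := by
  classical
  set μ := Measure.pi (fun _ : Fin k => (PMF.ofFintype α hα).toMeasure) with hμ
  set Bp : Finset (Fin T) := univ.filter (fun t => Qp < h t x) with hBp
  set Bm : Finset (Fin T) := univ.filter (fun t => h t x < Qm) with hBm
  have hsub : {J : Fin k → Fin T | η / 2 < |Med k (fun j => h (J j) x) - y|}
      ⊆ {J : Fin k → Fin T | k ≤ 2 * (Finset.univ.filter fun j => J j ∈ Bp).card}
      ∪ {J : Fin k → Fin T | k ≤ 2 * (Finset.univ.filter fun j => J j ∈ Bm).card} := by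
    intro J hJ
    simp only [Set.mem_setOf_eq] at hJ
    set a : Fin k → ℝ := fun j => h (J j) x with ha
    have hQpy : Qp ≤ y + η / 2 := by
      have := abs_le.mp hQp; linarith [this.2]
    have hQmy : y - η / 2 ≤ Qm := by
      have := abs_le.mp hQm; linarith [this.1]
    rcases lt_abs.mp hJ with hcase | hcase
    · left
      simp only [Set.mem_setOf_eq]
      by_contra hcon
      have h1 : 2 * ((univ : Finset (Fin k)).filter fun t => Qp < a t).card < k := by
        have : ((univ : Finset (Fin k)).filter fun j => J j ∈ Bp)
            = ((univ : Finset (Fin k)).filter fun t => Qp < a t) := by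
          apply Finset.filter_congr
          intro j _
          simp [hBp, ha]
        rw [this] at hcon
        omega
      have h2 := Med_le k hk a Qp h1
      have : Qp < Med k a := by linarith
      exact absurd h2 (not_le.mpr this)
    · right
      simp only [Set.mem_setOf_eq]
      have hlt : Med k a < Qm := by linarith
      have h1 := Med_lt k hk a Qm hlt
      have : ((univ : Finset (Fin k)).filter fun j => J j ∈ Bm)
          = ((univ : Finset (Fin k)).filter fun t => a t < Qm) := by
        apply Finset.filter_congr
        intro j _
        simp [hBm, ha]
      rw [this]
      omega
  calc μ {J : Fin k → Fin T | η / 2 < |Med k (fun j => h (J j) x) - y|}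
      ≤ μ ({J : Fin k → Fin T | k ≤ 2 * (Finset.univ.filter fun j => J j ∈ Bp).card}
        ∪ {J : Fin k → Fin T | k ≤ 2 * (Finset.univ.filter fun j => J j ∈ Bm).card}) :=
        measure_mono hsub
    _ ≤ μ {J : Fin k → Fin T | k ≤ 2 * (Finset.univ.filter fun j => J j ∈ Bp).card}
        + μ {J : Fin k → Fin T | k ≤ 2 * (Finset.univ.filter fun j => J j ∈ Bm).card} :=
        measure_union_le _ _
    _ ≤ ENNReal.ofReal (Real.exp (-2 * k * γ ^ 2))
        + ENNReal.ofReal (Real.exp (-2 * k * γ ^ 2)) := by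
        gcongr
        · exact key hk α hα Bp hγ hγ' (by rwa [hBp])
        · exact key hk α hα Bm hγ hγ' (by rwa [hBm])
    _ = ENNReal.ofReal (2 * Real.exp (-2 * k * γ ^ 2)) := by
        rw [← ENNReal.ofReal_add (Real.exp_nonneg _) (Real.exp_nonneg _)]
        congr 1
        ring
end

section
/- Suppose the largest t-shattered set structure forces 2^n witness points x_1 < x_2 < … < x_{2^n} in [0,1] ordered increasingly, realizing all sign patterns of n functions f_1,…,f_n at level t with offsets r. Then there exists an index i ∈ [n] such that the variation of f_i along the sequence (x_j) satisfies Σ_{j=1}^{2^n − 1} |f_i(x_{j+1}) − f_i(x_j)| ≥ (2^n − 1)/n · 2t. -/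
/-- if 2^n increasingly ordered witness points x_1 < … < x_{2^n}
in [0,1] realize all sign patterns of f_1,…,f_n at level t with offsets r, then
some f_i has variation along the sequence at least ((2^n − 1)/n)·2t. -/
theorem stmt19 (n : ℕ) (hn : 0 < n) (t : ℝ) (ht : 0 < t)
    (x : ℕ → ℝ) (hmono : ∀ j k : ℕ, j < k → k < 2 ^ n → x j < x k)
    (hrange : ∀ j < 2 ^ n, x j ∈ Set.Icc (0 : ℝ) 1)
    (f : Fin n → ℝ → ℝ) (r : Fin n → ℝ)
    (hshat : ∀ b : Fin n → Bool, ∃ j < 2 ^ n,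
      ∀ i, (b i = true → r i + t ≤ f i (x j)) ∧
        (b i = false → f i (x j) ≤ r i - t)) :
    ∃ i : Fin n, ((2 ^ n - 1 : ℝ) / n) * (2 * t) ≤
      ∑ j ∈ Finset.range (2 ^ n - 1), |f i (x (j + 1)) - f i (x j)| := by
  have h2n : 1 ≤ 2 ^ n := Nat.one_le_two_pow
  have hσ : ∀ b : Fin n → Bool, ∃ j : Fin (2 ^ n),
      ∀ i, (b i = true → r i + t ≤ f i (x j)) ∧ (b i = false → f i (x j) ≤ r i - t) := by
    intro b
    obtain ⟨j, hj, h⟩ := hshat b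
    exact ⟨⟨j, hj⟩, h⟩
  choose σ hσp using hσ
  have hinj : Function.Injective σ := by
    intro b b' hbb
    funext i
    have h1 := hσp b i
    have h2 := hσp b' i
    rw [hbb] at h1
    cases hb : b i <;> cases hb' : b' i
    · rfl
    · exfalso; have e1 := h1.2 hb; have e2 := h2.1 hb'; linarith
    · exfalso; have e1 := h1.1 hb; have e2 := h2.2 hb'; linarith
    · rfl
  have hbij : Function.Bijective σ := by
    rw [Fintype.bijective_iff_injective_and_card]
    exact ⟨hinj, by simp⟩
  obtain ⟨pinv, hpl, hpr⟩ := Function.bijective_iff_has_inverse.mp hbij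
  set Q : ℕ → Fin n → Bool := fun j i => if h : j < 2 ^ n then pinv ⟨j, h⟩ i else false with hQ
  have hQprop : ∀ j, ∀ h : j < 2 ^ n, ∀ i, (Q j i = true → r i + t ≤ f i (x j)) ∧
      (Q j i = false → f i (x j) ≤ r i - t) := by
    intro j h i
    have hp := hσp (pinv ⟨j, h⟩) i
    have he : σ (pinv ⟨j, h⟩) = ⟨j, h⟩ := hpr _
    rw [he] at hp
    simpa [hQ, dif_pos h] using hp
  have hQne : ∀ j, j < 2 ^ n - 1 → Q j ≠ Q (j + 1) := by
    intro j hj hEq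
    have hj1 : j + 1 < 2 ^ n := by omega
    have hj0 : j < 2 ^ n := by omega
    have hpe : pinv ⟨j, hj0⟩ = pinv ⟨j + 1, hj1⟩ := by
      funext i
      have := congrFun hEq i
      simpa [hQ, dif_pos hj0, dif_pos hj1] using this
    have := congrArg σ hpe
    rw [hpr, hpr] at this
    simp [Fin.ext_iff] at this
  set c : Fin n → ℕ := fun i =>
    ((Finset.range (2 ^ n - 1)).filter (fun j => Q j i ≠ Q (j + 1) i)).card with hc
  have hcsum : ∀ i, c i = ∑ j ∈ Finset.range (2 ^ n - 1),
      if Q j i ≠ Q (j + 1) i then 1 else 0 := by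
    intro i; rw [hc]; simp [Finset.card_filter]
  have hsum : (2 ^ n - 1 : ℕ) ≤ ∑ i : Fin n, c i := by
    calc (2 ^ n - 1 : ℕ) = ∑ j ∈ Finset.range (2 ^ n - 1), 1 := by simp
    _ ≤ ∑ j ∈ Finset.range (2 ^ n - 1), ∑ i : Fin n,
        (if Q j i ≠ Q (j + 1) i then 1 else 0) := by
      apply Finset.sum_le_sum
      intro j hj
      obtain ⟨i, hi⟩ := Function.ne_iff.mp (hQne j (Finset.mem_range.mp hj))
      calc (1 : ℕ) = if Q j i ≠ Q (j + 1) i then 1 else 0 := by simp [hi]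
      _ ≤ _ := Finset.single_le_sum (f := fun i' => if Q j i' ≠ Q (j + 1) i' then 1 else 0) (fun _ _ => Nat.zero_le _) (Finset.mem_univ i)
    _ = ∑ i : Fin n, c i := by rw [Finset.sum_comm]; simp [hcsum]
  have hne : (Finset.univ : Finset (Fin n)).Nonempty := ⟨⟨0, hn⟩, Finset.mem_univ _⟩
  have hsumR : ∑ i : Fin n, ((2 ^ n - 1 : ℝ) / n) ≤ ∑ i : Fin n, (c i : ℝ) := by
    have h1 : ((2 ^ n - 1 : ℕ) : ℝ) ≤ ∑ i : Fin n, (c i : ℝ) := by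
      rw [← Nat.cast_sum]; exact_mod_cast hsum
    have h2 : ((2 ^ n - 1 : ℕ) : ℝ) = (2 ^ n - 1 : ℝ) := by
      push_cast [Nat.cast_sub h2n]; ring
    have h3 : ∑ i : Fin n, ((2 ^ n - 1 : ℝ) / n) = (2 ^ n - 1 : ℝ) := by
      rw [Finset.sum_const]
      simp
      field_simp
    rw [h3, ← h2]; exact h1
  obtain ⟨i, -, hi⟩ := Finset.exists_le_of_sum_le hne hsumR
  refine ⟨i, ?_⟩
  have hvar : (c i : ℝ) * (2 * t) ≤
      ∑ j ∈ Finset.range (2 ^ n - 1), |f i (x (j + 1)) - f i (x j)| := by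
    calc (c i : ℝ) * (2 * t)
        = ∑ j ∈ (Finset.range (2 ^ n - 1)).filter (fun j => Q j i ≠ Q (j + 1) i),
            (2 * t) := by rw [Finset.sum_const, hc, nsmul_eq_mul]
    _ ≤ ∑ j ∈ (Finset.range (2 ^ n - 1)).filter (fun j => Q j i ≠ Q (j + 1) i),
            |f i (x (j + 1)) - f i (x j)| := by
        apply Finset.sum_le_sum
        intro j hj
        rw [Finset.mem_filter, Finset.mem_range] at hj
        obtain ⟨hjr, hjne⟩ := hj
        have hj1 : j + 1 < 2 ^ n := by omega
        have hj0 : j < 2 ^ n := by omega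
        have p0 := hQprop j hj0 i
        have p1 := hQprop (j + 1) hj1 i
        have habs1 := le_abs_self (f i (x (j + 1)) - f i (x j))
        have habs2 := neg_abs_le (f i (x (j + 1)) - f i (x j))
        cases hb0 : Q j i <;> cases hb1 : Q (j + 1) i
        · exact absurd (hb0.trans hb1.symm) hjne
        · have e1 := p0.2 hb0; have e2 := p1.1 hb1; linarith
        · have e1 := p0.1 hb0; have e2 := p1.2 hb1; linarith
        · exact absurd (hb0.trans hb1.symm) hjne
    _ ≤ _ := Finset.sum_le_sum_of_subset_of_nonneg (Finset.filter_subset _ _)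
          (fun _ _ _ => abs_nonneg _)
  calc ((2 ^ n - 1 : ℝ) / n) * (2 * t) ≤ (c i : ℝ) * (2 * t) := by
        apply mul_le_mul_of_nonneg_right hi (by linarith)
  _ ≤ _ := hvar
end
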